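/- Let G be a finite connected simple triangle-free graph with n ≥ 2 vertices and m edges, and let h ≥ 1 be an integer. If m ≤ 2(n + 2h − 2) and n > 16(h − 1), then the bondage number satisfies b(G) ≤ 7. -/

import Mathlib

/-!
If `G` has a vertex `u` and a vertex `v ≠ u` at distance at most two, deleting all edges at `u`
and `v` (keeping one edge `vw` to a common neighbour in the distance-two case) raises the
domination number, so `b(G) < deg u + deg v`. The edge bound together with `n > 16(h - 1)` gives
`4m < 9n`, and a discharging argument then yields such a pair with `deg u + deg v ≤ 8`.
-/

/-- A finset `D` of vertices is a dominating set of `G` if every vertex not in `D`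
is adjacent to some vertex in `D`. -/
def SimpleGraph.IsDominatingSet {V : Type*} (G : SimpleGraph V) (D : Finset V) : Prop :=
  ∀ v : V, v ∉ D → ∃ u ∈ D, G.Adj u v

/-- The domination number of `G`: the minimum cardinality of a dominating set. -/
noncomputable def SimpleGraph.dominationNumber {V : Type*} [Fintype V]
    (G : SimpleGraph V) : ℕ :=
  sInf {k | ∃ D : Finset V, G.IsDominatingSet D ∧ D.card = k}

/-- The bondage number of `G`: the minimum cardinality of a set `B` of edges of `G`
whose removal increases the domination number. -/
noncomputable def SimpleGraph.bondageNumber {V : Type*} [Fintype V]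
    (G : SimpleGraph V) : ℕ :=
  sInf {k | ∃ B : Finset (Sym2 V), ↑B ⊆ G.edgeSet ∧ B.card = k ∧
    G.dominationNumber < (G.deleteEdges ↑B).dominationNumber}

namespace SimpleGraph

open Finset

variable {V : Type*} {G H : SimpleGraph V} {D D' S : Finset V} {u v w : V}

namespace IsDominatingSet

theorem mono (hD : G.IsDominatingSet D) (hDD' : D ⊆ D') : G.IsDominatingSet D' := by
  intro x hx
  obtain ⟨y, hy, hyx⟩ := hD x (fun h => hx (hDD' h))
  exact ⟨y, hDD' hy, hyx⟩

theorem mem_of_forall_not_adj (hD : G.IsDominatingSet D) (hu : ∀ x, ¬G.Adj u x) : u ∈ D := by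
  by_contra hmem
  obtain ⟨y, -, hyu⟩ := hD u hmem
  exact hu y hyu.symm

theorem sdiff_of_le [DecidableEq V] (hD : H.IsDominatingSet D) (hHG : H ≤ G)
    (hnbr : ∀ x ∈ S, ∀ y, H.Adj x y → y ∈ D)
    (hS : ∀ x ∈ S, ∃ y ∈ D \ S, G.Adj y x) :
    G.IsDominatingSet (D \ S) := by
  intro z hz
  by_cases hzS : z ∈ S
  · exact hS z hzS
  have hzD : z ∉ D := fun h => hz (mem_sdiff.mpr ⟨h, hzS⟩)
  obtain ⟨y, hyD, hyz⟩ := hD z hzD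
  have hyS : y ∉ S := fun h => hzD (hnbr y h z hyz)
  exact ⟨y, mem_sdiff.mpr ⟨hyD, hyS⟩, hHG hyz⟩

end IsDominatingSet

theorem not_deleteEdges_adj_of_incidenceSet_subset {s : Set (Sym2 V)}
    (hs : G.incidenceSet u ⊆ s) (x : V) : ¬(G.deleteEdges s).Adj u x := by
  rw [deleteEdges_adj]
  exact fun ⟨hux, hnot⟩ => hnot (hs (G.mk'_mem_incidenceSet_left_iff.mpr hux))

theorem incidenceSet_union_subset_edgeSet :
    G.incidenceSet u ∪ G.incidenceSet v ⊆ G.edgeSet :=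
  Set.union_subset (G.incidenceSet_subset u) (G.incidenceSet_subset v)

section Fintype

variable [Fintype V]

theorem dominationNumber_le_card (hD : G.IsDominatingSet D) : G.dominationNumber ≤ D.card :=
  Nat.sInf_le ⟨D, hD, rfl⟩

theorem exists_isDominatingSet_card_eq_dominationNumber (G : SimpleGraph V) :
    ∃ D, G.IsDominatingSet D ∧ D.card = G.dominationNumber :=
  Nat.sInf_mem (s := {k | ∃ D, G.IsDominatingSet D ∧ #D = k})
    ⟨#univ, univ, fun v hv => absurd (mem_univ v) hv, rfl⟩

theorem dominationNumber_lt_of_forall_exists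
    (h : ∀ D, H.IsDominatingSet D → ∃ D', G.IsDominatingSet D' ∧ D'.card < D.card) :
    G.dominationNumber < H.dominationNumber := by
  obtain ⟨D, hD, hcard⟩ := H.exists_isDominatingSet_card_eq_dominationNumber
  obtain ⟨D', hD', hlt⟩ := h D hD
  exact hcard ▸ (dominationNumber_le_card hD').trans_lt hlt

theorem bondageNumber_le_card {B : Finset (Sym2 V)} (hB : ↑B ⊆ G.edgeSet)
    (hlt : G.dominationNumber < (G.deleteEdges ↑B).dominationNumber) :
    G.bondageNumber ≤ B.card :=
  Nat.sInf_le ⟨B, hB, rfl, hlt⟩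

section DecidableEq

variable [DecidableEq V]

theorem dominationNumber_lt_deleteEdges_incidenceSet_union (huv : G.Adj u v) :
    G.dominationNumber <
      (G.deleteEdges (G.incidenceSet u ∪ G.incidenceSet v)).dominationNumber := by
  refine dominationNumber_lt_of_forall_exists fun D hD => ?_
  set H := G.deleteEdges (G.incidenceSet u ∪ G.incidenceSet v)
  have hu : ∀ x, ¬H.Adj u x := not_deleteEdges_adj_of_incidenceSet_subset Set.subset_union_left
  have hv : ∀ x, ¬H.Adj v x := not_deleteEdges_adj_of_incidenceSet_subset Set.subset_union_right
  have hvD : v ∈ D := hD.mem_of_forall_not_adj hv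
  refine ⟨D \ {v}, hD.sdiff_of_le (deleteEdges_le _) ?_ ?_, ?_⟩
  · simp only [mem_singleton]
    rintro x rfl y hxy
    exact absurd hxy (hv y)
  · simp only [mem_singleton]
    rintro x rfl
    exact ⟨u, by simp [hD.mem_of_forall_not_adj hu, huv.ne], huv⟩
  · rw [sdiff_singleton_eq_erase]
    exact card_erase_lt_of_mem hvD

theorem dominationNumber_lt_deleteEdges_incidenceSet_union_diff (huw : G.Adj u w)
    (hwv : G.Adj w v) (huv : u ≠ v) :
    G.dominationNumber <
      (G.deleteEdges ((G.incidenceSet u ∪ G.incidenceSet v) \ {s(v, w)})).dominationNumber := by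
  refine dominationNumber_lt_of_forall_exists fun D hD => ?_
  set H := G.deleteEdges ((G.incidenceSet u ∪ G.incidenceSet v) \ {s(v, w)})
  have hu : ∀ x, ¬H.Adj u x := by
    refine not_deleteEdges_adj_of_incidenceSet_subset fun e he => ⟨Or.inl he, fun h => ?_⟩
    have := he.2
    rw [Set.mem_singleton_iff.mp h, Sym2.mem_iff] at this
    exact this.elim huv huw.ne
  have hv : ∀ x, H.Adj v x → x = w := by
    intro x hvx
    by_contra hxw
    rw [deleteEdges_adj] at hvx
    refine hvx.2 ⟨Or.inr (G.mk'_mem_incidenceSet_left_iff.mpr hvx.1), fun h => hxw ?_⟩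
    exact Sym2.congr_right.mp (Set.mem_singleton_iff.mp h)
  have huD : u ∈ D := hD.mem_of_forall_not_adj hu
  by_cases hvD : v ∈ D
  · refine ⟨insert w D \ {u, v},
      (hD.mono (subset_insert w D)).sdiff_of_le (deleteEdges_le _) ?_ ?_, ?_⟩
    · simp only [mem_insert, mem_singleton]
      rintro x (rfl | rfl) y hxy
      · exact absurd hxy (hu y)
      · exact Or.inl (hv y hxy)
    · simp only [mem_insert, mem_singleton]
      rintro x (rfl | rfl)
      · exact ⟨w, by simp [huw.ne.symm, hwv.ne], huw.symm⟩
      · exact ⟨w, by simp [huw.ne.symm, hwv.ne], hwv⟩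
    · have hsub : {u, v} ⊆ insert w D := by
        simp [insert_subset_iff, huD, hvD]
      have h1 := card_sdiff_of_subset hsub
      have h2 := card_insert_le w D
      have h3 := card_pair huv
      have h4 := card_pos.mpr ⟨u, huD⟩
      omega
  · have hwD : w ∈ D := by
      obtain ⟨y, hyD, hyv⟩ := hD v hvD
      exact hv y hyv.symm ▸ hyD
    refine ⟨D \ {u}, hD.sdiff_of_le (deleteEdges_le _) ?_ ?_, ?_⟩
    · simp only [mem_singleton]
      rintro x rfl y hxy
      exact absurd hxy (hu y)
    · simp only [mem_singleton]
      rintro x rfl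
      exact ⟨w, by simp [hwD, huw.ne.symm], huw.symm⟩
    · rw [sdiff_singleton_eq_erase]
      exact card_erase_lt_of_mem huD

end DecidableEq

variable [DecidableRel G.Adj]

theorem sum_two_mul_degree_sub (k : ℤ) :
    ∑ v, (2 * (G.degree v : ℤ) - k) = 4 * #G.edgeFinset - k * Fintype.card V := by
  have hsum : ∑ v, (G.degree v : ℤ) = 2 * #G.edgeFinset := by
    exact_mod_cast G.sum_degrees_eq_twice_card_edges
  simp only [sum_sub_distrib, ← mul_sum, hsum, sum_const, card_univ, nsmul_eq_mul]
  ring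

variable [DecidableEq V]

theorem card_incidenceFinset_union_lt_of_adj (huv : G.Adj u v) :
    #(G.incidenceFinset u ∪ G.incidenceFinset v) < G.degree u + G.degree v := by
  have hinter : s(u, v) ∈ G.incidenceFinset u ∩ G.incidenceFinset v := by
    simp [huv, G.mk'_mem_incidenceSet_right_iff.mpr huv]
  have := card_union_add_card_inter (G.incidenceFinset u) (G.incidenceFinset v)
  have := card_pos.mpr ⟨_, hinter⟩
  rw [card_incidenceFinset_eq_degree, card_incidenceFinset_eq_degree] at *
  omega

theorem coe_incidenceFinset_union :
    (↑(G.incidenceFinset u ∪ G.incidenceFinset v) : Set (Sym2 V)) =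
      G.incidenceSet u ∪ G.incidenceSet v := by
  simp

theorem bondageNumber_lt_of_adj (huv : G.Adj u v) :
    G.bondageNumber < G.degree u + G.degree v := by
  refine (bondageNumber_le_card ?_ ?_).trans_lt (card_incidenceFinset_union_lt_of_adj huv)
  · rw [coe_incidenceFinset_union]
    exact incidenceSet_union_subset_edgeSet
  · rw [coe_incidenceFinset_union]
    exact dominationNumber_lt_deleteEdges_incidenceSet_union huv

theorem bondageNumber_lt_of_adj_of_adj (huw : G.Adj u w) (hwv : G.Adj w v) (huv : u ≠ v) :
    G.bondageNumber < G.degree u + G.degree v := by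
  have hvw : s(v, w) ∈ G.incidenceFinset u ∪ G.incidenceFinset v := by
    simp [hwv.symm]
  have hcard : #((G.incidenceFinset u ∪ G.incidenceFinset v).erase s(v, w)) <
      G.degree u + G.degree v := by
    have := card_union_le (G.incidenceFinset u) (G.incidenceFinset v)
    have := card_erase_of_mem hvw
    have := card_pos.mpr ⟨_, hvw⟩
    rw [card_incidenceFinset_eq_degree, card_incidenceFinset_eq_degree] at *
    omega
  refine (bondageNumber_le_card ?_ ?_).trans_lt hcard
  · rw [coe_erase, coe_incidenceFinset_union]
    exact Set.sdiff_subset.trans incidenceSet_union_subset_edgeSet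
  · rw [coe_erase, coe_incidenceFinset_union]
    exact dominationNumber_lt_deleteEdges_incidenceSet_union_diff huw hwv huv

/-- Discharging with charge `2 deg v - (2d + 1)`, of total `4m - (2d + 1)n`: a vertex of degree at
most `d` borrows from a chosen neighbour, whose degree then exceeds `d`; the choice is injective
since two vertices sharing that neighbour are at distance two. -/
theorem exists_degree_add_degree_le_of_four_mul_card_edgeFinset_lt (d : ℕ)
    (hdeg : ∀ v, 0 < G.degree v) (hE : 4 * #G.edgeFinset < (2 * d + 1) * Fintype.card V) :
    ∃ u v, u ≠ v ∧ (G.Adj u v ∨ ∃ w, G.Adj u w ∧ G.Adj w v) ∧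
      G.degree u + G.degree v ≤ 2 * d := by
  by_contra! hcon
  choose f hf using fun v => (G.degree_pos_iff_exists_adj v).mp (hdeg v)
  have hpair : ∀ a, 2 * d < G.degree a + G.degree (f a) :=
    fun a => hcon a (f a) (hf a).ne (Or.inl (hf a))
  set low : Finset V := {v | G.degree v ≤ d}
  have hinj : Set.InjOn f low := by
    intro a ha b hb hab
    by_contra hne
    have := hcon a b hne (Or.inr ⟨f a, hf a, hab ▸ (hf b).symm⟩)
    simp only [coe_filter, mem_univ, true_and, Set.mem_ofPred_eq, low] at ha hb
    omega
  set c : V → ℤ := fun v => 2 * G.degree v - (2 * d + 1)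
  have hc_compl : ∀ v ∈ lowᶜ, 0 ≤ c v := by
    intro v hv
    simp only [mem_compl, mem_filter, mem_univ, true_and, not_le, low] at hv
    simp only [c]
    omega
  have : (0 : ℤ) ≤ 4 * #G.edgeFinset - (2 * d + 1) * Fintype.card V :=
    calc (0 : ℤ) ≤ ∑ a ∈ low, (c a + c (f a)) := sum_nonneg fun a _ => by
          have := hpair a
          simp only [c]
          omega
      _ = ∑ a ∈ low, c a + ∑ b ∈ low.image f, c b := by
          rw [sum_add_distrib, sum_image hinj]
      _ ≤ ∑ a ∈ low, c a + ∑ b ∈ lowᶜ, c b := by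
          refine add_le_add le_rfl (sum_le_sum_of_subset_of_nonneg ?_ fun v hv _ => hc_compl v hv)
          intro b hb
          obtain ⟨a, ha, rfl⟩ := mem_image.mp hb
          have := hpair a
          simp only [mem_compl, mem_filter, mem_univ, true_and, low] at ha ⊢
          omega
      _ = ∑ v, c v := sum_add_sum_compl low c
      _ = 4 * #G.edgeFinset - (2 * d + 1) * Fintype.card V := sum_two_mul_degree_sub _
  zify at hE
  linarith

end Fintype

end SimpleGraph

theorem stmt_15_general {V : Type*} [Fintype V] (G : SimpleGraph V)
    [DecidableRel G.Adj] (hconn : G.Connected)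
    (hn : 2 ≤ Fintype.card V) (h : ℕ)
    (hm : G.edgeFinset.card ≤ 2 * (Fintype.card V + 2 * h - 2))
    (hbig : 16 * (h - 1) < Fintype.card V) :
    G.bondageNumber ≤ 7 := by
  classical
  have : Nontrivial V := Fintype.one_lt_card_iff_nontrivial.mp hn
  obtain ⟨u, v, huv, hclose, hsum⟩ :=
    G.exists_degree_add_degree_le_of_four_mul_card_edgeFinset_lt 4
      (fun v => hconn.preconnected.degree_pos_of_nontrivial v) (by omega)
  have : G.bondageNumber < G.degree u + G.degree v := by
    rcases hclose with hadj | ⟨w, huw, hwv⟩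
    · exact G.bondageNumber_lt_of_adj hadj
    · exact G.bondageNumber_lt_of_adj_of_adj huw hwv huv
  omega

theorem stmt_15 {V : Type*} [Fintype V] [DecidableEq V] (G : SimpleGraph V)
    [DecidableRel G.Adj] (hconn : G.Connected) (htf : G.CliqueFree 3)
    (hn : 2 ≤ Fintype.card V) (h : ℕ) (hh : 1 ≤ h)
    (hm : G.edgeFinset.card ≤ 2 * (Fintype.card V + 2 * h - 2))
    (hbig : 16 * (h - 1) < Fintype.card V) :
    G.bondageNumber ≤ 7 :=
  stmt_15_general G hconn hn h hm hbig
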